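/- Let n, w be positive integers, G an n-vertex graph, W ⊆ V(G) with |W| = w, and d ≥ 1 a real. Suppose δ(G) ≥ n − w/(8d) and p ≥ 500·d·log n / w. Then with probability at least 1 − n^{−7}, the p-random subgraph G_p of G satisfies: (E1) |N_{G_p}(X, W)| ≥ d|X| for all X ⊆ V(G) with 1 ≤ |X| < w/(2d), and (E2) e_{G_p}(X, Y) > 0 for all disjoint X, Y ⊆ V(G) with |X|, |Y| ≥ w/(2d). -/

import Mathlib

/-!
If (E1) fails, some `X` with `1 ≤ |X| < |W|/(2d)` has fewer than `d|X|` neighbours in `W`, so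
there is `S ⊆ W` of size `⌊d|X|⌋` with no edge of `G_p` from `X` to `W \ S`; if (E2) fails, there
are two sets of size `t = ⌈|W|/(2d)⌉` with no `G_p`-edge between them. By the minimum-degree
condition every vertex misses at most `|W|/(8d)` vertices of any set, so in either case `G` has
many edges between the two sets (at least `3|X||W|/16`, resp. `3t²/8`), and the probability that
all of them are missing from `G_p` is at most `exp(-p · #edges) ≤ n^(-90 d |X|)`, resp.
`n^(-90 t)`. There are at most `n^(|X| + d|X|)`, resp. `n^(2t)`, choices of the two sets, so a union
bound gives failure probability at most `n · n^(-88) + n^(-88) ≤ n^(-7)`.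
-/

open MeasureTheory Finset
open scoped NNReal ENNReal

lemma Real.pow_mul_rpow_neg_le {x : ℝ} (hx : 1 ≤ x) {a : ℕ} {c e : ℝ} (h : a - c ≤ e) :
    x ^ a * x ^ (-c) ≤ x ^ e := by
  rw [← Real.rpow_natCast, ← Real.rpow_add (by linarith), ← sub_eq_add_neg]
  exact Real.rpow_le_rpow_of_exponent_le hx h

lemma MeasureTheory.measure_biUnion_le_card_mul {α ι : Type*} [MeasurableSpace α] (μ : Measure α)
    (s : Finset ι) (E : ι → Set α) {b : ℝ} (h : ∀ i ∈ s, μ (E i) ≤ ENNReal.ofReal b) :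
    μ (⋃ i ∈ s, E i) ≤ ENNReal.ofReal (#s * b) :=
  calc μ (⋃ i ∈ s, E i) ≤ ∑ i ∈ s, μ (E i) := measure_biUnion_finset_le s E
    _ ≤ #s • ENNReal.ofReal b := sum_le_card_nsmul s _ _ h
    _ = ENNReal.ofReal (#s * b) := by
      rw [nsmul_eq_mul, ENNReal.ofReal_mul (Nat.cast_nonneg _), ENNReal.ofReal_natCast]

lemma Finset.card_le_two_mul_card_image_sym2Mk {α : Type*} [DecidableEq α] (P : Finset (α × α)) :
    #P ≤ 2 * #(P.image fun a => s(a.1, a.2)) := by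
  refine card_le_mul_card_image P 2 fun e he => ?_
  obtain ⟨⟨x, y⟩, -, rfl⟩ := mem_image.1 he
  calc #{a ∈ P | s(a.1, a.2) = s(x, y)} ≤ #{(x, y), (y, x)} := card_le_card fun ⟨a, b⟩ hab => by
        rcases Sym2.eq_iff.1 (mem_filter.1 hab).2 with ⟨rfl, rfl⟩ | ⟨rfl, rfl⟩ <;> simp
    _ ≤ 2 := card_le_two

lemma choose_mul_choose_mul_rpow_le {N w k j : ℕ} {c e : ℝ} (hN : 0 < N) (hwN : w ≤ N)
    (h : k + j - c ≤ e) :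
    (N.choose k : ℝ) * (w.choose j * (N : ℝ) ^ (-c)) ≤ (N : ℝ) ^ e :=
  calc (N.choose k : ℝ) * (w.choose j * (N : ℝ) ^ (-c))
      ≤ N ^ k * (N ^ j * (N : ℝ) ^ (-c)) := by
        gcongr
        · exact_mod_cast Nat.choose_le_pow N k
        · exact_mod_cast (Nat.choose_le_pow w j).trans (Nat.pow_le_pow_left hwN j)
    _ = (N : ℝ) ^ (k + j) * (N : ℝ) ^ (-c) := by ring
    _ ≤ (N : ℝ) ^ e := Real.pow_mul_rpow_neg_le (by exact_mod_cast hN) (by push_cast; linarith)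

noncomputable def bernoulliPi (ι : Type*) [Fintype ι] (q : ℝ≥0) (hq : q ≤ 1) :
    Measure (ι → Bool) :=
  Measure.pi fun _ => (PMF.bernoulli q hq).toMeasure

section bernoulliPi

variable {ι : Type*} [Fintype ι] {q : ℝ≥0} (hq : q ≤ 1)

instance : IsProbabilityMeasure (bernoulliPi ι q hq) := by
  unfold bernoulliPi
  infer_instance

lemma bernoulliPi_forall_false (s : Finset ι) :
    bernoulliPi ι q hq {f | ∀ i ∈ s, f i = false} = ((1 - q) ^ #s : ℝ≥0) := by
  have hs : {f : ι → Bool | ∀ i ∈ s, f i = false} = (s : Set ι).pi fun _ => {false} := by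
    ext
    simp
  rw [bernoulliPi, hs, Measure.pi_pi_finset, prod_const,
    PMF.toMeasure_apply_singleton _ _ (measurableSet_singleton _), PMF.bernoulli_apply]
  simp

lemma bernoulliPi_forall_false_le (s : Finset ι) :
    bernoulliPi ι q hq {f | ∀ i ∈ s, f i = false} ≤ ENNReal.ofReal (Real.exp (-(q * #s))) := by
  rw [bernoulliPi_forall_false, ← ENNReal.ofReal_coe_nnreal]
  refine ENNReal.ofReal_le_ofReal ?_
  rw [NNReal.coe_pow, NNReal.coe_sub hq, NNReal.coe_one, mul_comm, neg_mul_eq_mul_neg,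
    Real.exp_nat_mul]
  gcongr
  · exact sub_nonneg.2 (by exact_mod_cast hq)
  · exact Real.one_sub_le_exp_neg _

end bernoulliPi

namespace SimpleGraph

variable {V : Type*}

/-- The outcome of `G_p` in which `f` marks the kept edges. -/
abbrev keepEdges (G : SimpleGraph V) (f : Sym2 V → Bool) : SimpleGraph V :=
  G ⊓ fromEdgeSet {e | f e = true}

lemma keepEdges_adj {G : SimpleGraph V} {f : Sym2 V → Bool} {x y : V} :
    (G.keepEdges f).Adj x y ↔ G.Adj x y ∧ f s(x, y) = true := by
  simp only [keepEdges, inf_adj, fromEdgeSet_adj, Set.mem_setOf_eq]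
  exact ⟨fun h => ⟨h.1, h.2.1⟩, fun h => ⟨h.1, h.2, h.1.ne⟩⟩

def noEdgeBetween (G : SimpleGraph V) (A B : Set V) : Set (Sym2 V → Bool) :=
  {f | ∀ x ∈ A, ∀ y ∈ B, ¬(G.keepEdges f).Adj x y}

/- Properties (E1) and (E2) of the paper: `H` `d`-expands into `W` iff
`H.ExpandsInto W d ∧ H.JoinsLargeSets (#W / (2 * d))`. -/

def ExpandsInto (H : SimpleGraph V) (W : Finset V) (d : ℝ) : Prop :=
  ∀ X : Set V, 1 ≤ X.ncard → (X.ncard : ℝ) < #W / (2 * d) →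
    d * X.ncard ≤ ({y | y ∈ W ∧ ∃ x ∈ X, H.Adj x y}.ncard : ℝ)

def JoinsLargeSets (H : SimpleGraph V) (m : ℝ) : Prop :=
  ∀ X Y : Set V, Disjoint X Y → m ≤ X.ncard → m ≤ Y.ncard → ∃ x ∈ X, ∃ y ∈ Y, H.Adj x y

section Finite

variable [Fintype V]

lemma exists_of_not_expandsInto [DecidableEq V] {H : SimpleGraph V} {W : Finset V} {d : ℝ}
    (hd : 0 < d) (h : ¬H.ExpandsInto W d) :
    ∃ A : Finset V, 1 ≤ #A ∧ (#A : ℝ) < #W / (2 * d) ∧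
      ∃ S ∈ powersetCard ⌊d * #A⌋₊ W, ∀ x ∈ A, ∀ y ∈ W \ S, ¬H.Adj x y := by
  classical
  simp only [ExpandsInto, not_forall, not_le, exists_prop] at h
  obtain ⟨X, hX, hXW, hN⟩ := h
  set N := {y ∈ W | ∃ x ∈ X, H.Adj x y}
  have hNcard : {y | y ∈ W ∧ ∃ x ∈ X, H.Adj x y}.ncard = #N := by
    rw [← Set.ncard_coe_finset, coe_filter]
  rw [Set.ncard_eq_toFinset_card' X] at hX hXW hN
  refine ⟨X.toFinset, hX, hXW, ?_⟩
  have hNj : #N ≤ ⌊d * #X.toFinset⌋₊ := Nat.le_floor (hNcard ▸ hN.le)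
  have hjW : ⌊d * #X.toFinset⌋₊ ≤ #W := by
    refine Nat.floor_le_of_le ?_
    rw [lt_div_iff₀ (by positivity)] at hXW
    linarith [(#W).cast_nonneg (α := ℝ)]
  obtain ⟨S, hNS, hSW, hS⟩ := exists_subsuperset_card_eq (filter_subset _ W) hNj hjW
  refine ⟨S, mem_powersetCard.2 ⟨hSW, hS⟩, fun x hx y hy hxy => ?_⟩
  rw [mem_sdiff] at hy
  exact hy.2 (hNS (mem_filter.2 ⟨hy.1, x, Set.mem_toFinset.1 hx, hxy⟩))

lemma exists_of_not_joinsLargeSets {H : SimpleGraph V} {m : ℝ} (h : ¬H.JoinsLargeSets m) :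
    ∃ A B : Finset V, #A = ⌈m⌉₊ ∧ #B = ⌈m⌉₊ ∧ ∀ x ∈ A, ∀ y ∈ B, ¬H.Adj x y := by
  classical
  simp only [JoinsLargeSets, not_forall, not_exists, not_and, exists_prop] at h
  obtain ⟨X, Y, -, hX, hY, hXY⟩ := h
  obtain ⟨A, hAX, hA⟩ := Set.exists_subset_card_eq (Nat.ceil_le.2 hX)
  obtain ⟨B, hBY, hB⟩ := Set.exists_subset_card_eq (Nat.ceil_le.2 hY)
  refine ⟨A.toFinset, B.toFinset, by rwa [← Set.ncard_eq_toFinset_card'],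
    by rwa [← Set.ncard_eq_toFinset_card'], fun x hx y hy => ?_⟩
  exact hXY x (hAX (Set.mem_toFinset.1 hx)) y (hBY (Set.mem_toFinset.1 hy))

variable (G : SimpleGraph V) [DecidableRel G.Adj]

lemma card_sub_le_card_filter_adj (x : V) (t : Finset V) :
    (#t : ℝ) - (Fintype.card V - G.minDegree) ≤ #{y ∈ t | G.Adj x y} := by
  classical
  have hsplit : (#t : ℝ) = #{y ∈ t | G.Adj x y} + #{y ∈ t | ¬G.Adj x y} := by
    exact_mod_cast (card_filter_add_card_filter_not (s := t) (G.Adj x)).symm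
  have hdisj : Disjoint {y ∈ t | ¬G.Adj x y} (G.neighborFinset x) :=
    Finset.disjoint_left.2 fun y hy hy' => (mem_filter.1 hy).2 ((mem_neighborFinset _ _ _).1 hy')
  have hnon : (#{y ∈ t | ¬G.Adj x y} : ℝ) + G.degree x ≤ Fintype.card V := by
    rw [← card_neighborFinset_eq_degree]
    exact_mod_cast (card_union_of_disjoint hdisj).symm.trans_le (card_le_univ _)
  have hmin : (G.minDegree : ℝ) ≤ G.degree x := by exact_mod_cast G.minDegree_le_degree x
  linarith

lemma card_mul_sub_le_card_interedges (s t : Finset V) :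
    (#s : ℝ) * (#t - (Fintype.card V - G.minDegree)) ≤ #(G.interedges s t) := by
  have hsum : #(G.interedges s t) = ∑ x ∈ s, #{y ∈ t | G.Adj x y} := by
    simp only [interedges_def, card_filter, sum_product]
  rw [hsum, Nat.cast_sum, ← nsmul_eq_mul]
  exact card_nsmul_le_sum _ _ _ fun x _ => G.card_sub_le_card_filter_adj x t

variable {q : ℝ≥0} (hq : q ≤ 1)

lemma bernoulliPi_noEdgeBetween_le (A B : Finset V) :
    bernoulliPi (Sym2 V) q hq (G.noEdgeBetween A B) ≤
      ENNReal.ofReal (Real.exp (-(q * #(G.interedges A B) / 2))) := by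
  classical
  set E := (G.interedges A B).image fun a => s(a.1, a.2)
  have hE : (#(G.interedges A B) : ℝ) ≤ 2 * #E := by
    exact_mod_cast card_le_two_mul_card_image_sym2Mk _
  calc bernoulliPi (Sym2 V) q hq (G.noEdgeBetween A B)
      ≤ bernoulliPi (Sym2 V) q hq {f | ∀ e ∈ E, f e = false} := by
        refine measure_mono fun f hf e he => ?_
        obtain ⟨⟨x, y⟩, hxy, rfl⟩ := mem_image.1 he
        rw [mem_interedges_iff] at hxy
        by_contra h
        exact hf x hxy.1 y hxy.2.1 (keepEdges_adj.2 ⟨hxy.2.2, by simpa using h⟩)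
    _ ≤ ENNReal.ofReal (Real.exp (-(q * #E))) := bernoulliPi_forall_false_le hq E
    _ ≤ ENNReal.ofReal (Real.exp (-(q * #(G.interedges A B) / 2))) := by
        gcongr
        nlinarith [q.2]

lemma bernoulliPi_noEdgeBetween_le_rpow [Nonempty V] (A B : Finset V) {c : ℝ}
    (hc : c * Real.log (Fintype.card V) ≤
      q * (#A * (#B - (Fintype.card V - G.minDegree))) / 2) :
    bernoulliPi (Sym2 V) q hq (G.noEdgeBetween A B) ≤
      ENNReal.ofReal ((Fintype.card V : ℝ) ^ (-c)) := by
  refine (G.bernoulliPi_noEdgeBetween_le hq A B).trans ?_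
  rw [Real.rpow_def_of_pos (by exact_mod_cast Fintype.card_pos)]
  gcongr
  nlinarith [G.card_mul_sub_le_card_interedges A B, q.2]

lemma bernoulliPi_noEdgeBetween_sdiff_le [Nonempty V] [DecidableEq V] {W : Finset V} {d : ℝ}
    (hd : 1 ≤ d) (hδ : (Fintype.card V : ℝ) - #W / (8 * d) ≤ G.minDegree)
    (hqW : 500 * d * Real.log (Fintype.card V) / #W ≤ q) {A S : Finset V} (hSW : S ⊆ W)
    (hSA : (#S : ℝ) ≤ d * #A) (hAW : d * #A < #W / 2) :
    bernoulliPi (Sym2 V) q hq (G.noEdgeBetween A ↑(W \ S)) ≤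
      ENNReal.ofReal ((Fintype.card V : ℝ) ^ (-(90 * d * #A))) := by
  refine G.bernoulliPi_noEdgeBetween_le_rpow hq A (W \ S) ?_
  have hwR : (0 : ℝ) < #W := by nlinarith [(#A).cast_nonneg (α := ℝ)]
  have hqw : 500 * d * Real.log (Fintype.card V) ≤ q * #W := (div_le_iff₀ hwR).1 hqW
  have hs : Fintype.card V - G.minDegree ≤ (#W : ℝ) / 8 := by
    have : (#W : ℝ) / (8 * d) ≤ #W / 8 :=
      div_le_div_of_nonneg_left hwR.le (by norm_num) (by linarith)
    linarith
  have hB : (#(W \ S) : ℝ) = #W - #S := by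
    rw [card_sdiff_of_subset hSW, Nat.cast_sub (card_le_card hSW)]
  calc 90 * d * #A * Real.log (Fintype.card V) ≤ 3 / 16 * #A * (q * #W) := by
        nlinarith [Real.log_natCast_nonneg (Fintype.card V)]
    _ = q * (#A * (3 * #W / 8)) / 2 := by ring
    _ ≤ q * (#A * (#(W \ S) - (Fintype.card V - G.minDegree))) / 2 := by
        rw [hB]
        gcongr
        linarith

lemma bernoulliPi_noEdgeBetween_le_of_card_eq [Nonempty V] {W : Finset V} {d : ℝ} (hd : 1 ≤ d)
    (hw : 0 < #W) (hδ : (Fintype.card V : ℝ) - #W / (8 * d) ≤ G.minDegree)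
    (hqW : 500 * d * Real.log (Fintype.card V) / #W ≤ q) {A B : Finset V} (hAB : #A = #B)
    (hA : #W / (2 * d) ≤ (#A : ℝ)) :
    bernoulliPi (Sym2 V) q hq (G.noEdgeBetween A B) ≤
      ENNReal.ofReal ((Fintype.card V : ℝ) ^ (-(90 * #A : ℝ))) := by
  refine G.bernoulliPi_noEdgeBetween_le_rpow hq A B ?_
  have hwR : (0 : ℝ) < #W := by exact_mod_cast hw
  have hqw : 500 * d * Real.log (Fintype.card V) ≤ q * #W := (div_le_iff₀ hwR).1 hqW
  rw [div_le_iff₀ (by linarith)] at hA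
  have hs : Fintype.card V - G.minDegree ≤ (#A : ℝ) / 4 := by
    have : (#W : ℝ) / (8 * d) ≤ #A / 4 := by
      rw [div_le_iff₀ (by linarith)]
      linarith
    linarith
  have hqA : 250 * Real.log (Fintype.card V) ≤ q * #A := by
    nlinarith [mul_le_mul_of_nonneg_left hA q.2]
  calc 90 * #A * Real.log (Fintype.card V) ≤ 3 / 8 * #A * (q * #A) := by
        nlinarith [Real.log_natCast_nonneg (Fintype.card V)]
    _ = q * (#A * (3 * #A / 4)) / 2 := by ring
    _ ≤ q * (#A * (#B - (Fintype.card V - G.minDegree))) / 2 := by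
        rw [← hAB]
        gcongr
        linarith

lemma bernoulliPi_not_expandsInto_le [Nonempty V] {W : Finset V} {d : ℝ} (hd : 1 ≤ d)
    (hδ : (Fintype.card V : ℝ) - #W / (8 * d) ≤ G.minDegree)
    (hqW : 500 * d * Real.log (Fintype.card V) / #W ≤ q) :
    bernoulliPi (Sym2 V) q hq {f | ¬(G.keepEdges f).ExpandsInto W d} ≤
      ENNReal.ofReal (Fintype.card V * (Fintype.card V : ℝ) ^ (-88 : ℝ)) := by
  classical
  set N := Fintype.card V
  set K := {k ∈ Icc 1 N | ((k : ℕ) : ℝ) < #W / (2 * d)}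
  have hcover : {f | ¬(G.keepEdges f).ExpandsInto W d} ⊆
      ⋃ k ∈ K, ⋃ A ∈ powersetCard k (univ : Finset V), ⋃ S ∈ powersetCard ⌊d * k⌋₊ W,
        G.noEdgeBetween A ↑(W \ S) := by
    intro f hf
    obtain ⟨A, hA1, hAW, S, hS, hAS⟩ := exists_of_not_expandsInto (by linarith) hf
    simp only [Set.mem_iUnion, exists_prop]
    exact ⟨#A, mem_filter.2 ⟨mem_Icc.2 ⟨hA1, card_le_univ A⟩, hAW⟩, A,
      mem_powersetCard.2 ⟨subset_univ _, rfl⟩, S, hS, fun x hx y hy => hAS x hx y hy⟩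
  refine (measure_mono hcover).trans <|
    (measure_biUnion_le_card_mul _ _ _ (b := (N : ℝ) ^ (-88 : ℝ)) fun k hk => ?_).trans ?_
  · obtain ⟨hkN, hkW⟩ := mem_filter.1 hk
    have hk1 : (1 : ℝ) ≤ k := by exact_mod_cast (mem_Icc.1 hkN).1
    have hdk : d * k < #W / 2 := by
      rw [lt_div_iff₀ (by linarith)] at hkW
      linarith
    have hj : (⌊d * k⌋₊ : ℝ) ≤ d * k := Nat.floor_le (by positivity)
    refine (measure_biUnion_le_card_mul _ _ _ fun A hA => measure_biUnion_le_card_mul _ _ _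
      (b := (N : ℝ) ^ (-(90 * d * k))) fun S hS => ?_).trans ?_
    · obtain ⟨-, rfl⟩ := mem_powersetCard.1 hA
      obtain ⟨hSW, hS⟩ := mem_powersetCard.1 hS
      exact G.bernoulliPi_noEdgeBetween_sdiff_le hq hd hδ hqW hSW (hS ▸ hj) hdk
    · rw [card_powersetCard, card_powersetCard, card_univ]
      exact ENNReal.ofReal_le_ofReal (choose_mul_choose_mul_rpow_le Fintype.card_pos
        (card_le_univ W) (by nlinarith))
  · gcongr
    exact_mod_cast (card_filter_le _ _).trans (Nat.card_Icc 1 N).le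

lemma bernoulliPi_not_joinsLargeSets_le [Nonempty V] {W : Finset V} {d : ℝ} (hd : 1 ≤ d)
    (hw : 0 < #W) (hδ : (Fintype.card V : ℝ) - #W / (8 * d) ≤ G.minDegree)
    (hqW : 500 * d * Real.log (Fintype.card V) / #W ≤ q) :
    bernoulliPi (Sym2 V) q hq {f | ¬(G.keepEdges f).JoinsLargeSets (#W / (2 * d))} ≤
      ENNReal.ofReal ((Fintype.card V : ℝ) ^ (-88 : ℝ)) := by
  set N := Fintype.card V
  set t := ⌈(#W : ℝ) / (2 * d)⌉₊
  have ht : (1 : ℝ) ≤ t := by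
    have : (0 : ℝ) < #W := by exact_mod_cast hw
    exact_mod_cast Nat.one_le_iff_ne_zero.2 (Nat.ceil_pos.2 (by positivity)).ne'
  have hcover : {f | ¬(G.keepEdges f).JoinsLargeSets (#W / (2 * d))} ⊆
      ⋃ A ∈ powersetCard t (univ : Finset V), ⋃ B ∈ powersetCard t (univ : Finset V),
        G.noEdgeBetween A B := by
    intro f hf
    obtain ⟨A, B, hA, hB, hAB⟩ := exists_of_not_joinsLargeSets hf
    simp only [Set.mem_iUnion, exists_prop]
    exact ⟨A, mem_powersetCard.2 ⟨subset_univ _, hA⟩, B, mem_powersetCard.2 ⟨subset_univ _, hB⟩,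
      fun x hx y hy => hAB x hx y hy⟩
  refine (measure_mono hcover).trans <| (measure_biUnion_le_card_mul _ _ _ fun A hA =>
    measure_biUnion_le_card_mul _ _ _ (b := (N : ℝ) ^ (-(90 * t : ℝ))) fun B hB => ?_).trans ?_
  · rw [mem_powersetCard] at hA hB
    rw [← hA.2]
    exact G.bernoulliPi_noEdgeBetween_le_of_card_eq hq hd hw hδ hqW (hA.2.trans hB.2.symm)
      (hA.2 ▸ Nat.le_ceil _)
  · rw [card_powersetCard, card_univ]
    exact ENNReal.ofReal_le_ofReal (choose_mul_choose_mul_rpow_le Fintype.card_pos le_rfl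
      (by nlinarith))

end Finite

end SimpleGraph

theorem stmt_15_general {V : Type*} [Fintype V] [Nonempty V]
    (G : SimpleGraph V) [DecidableRel G.Adj] (n w : ℕ) (hw : 0 < w)
    (hcard : Fintype.card V = n) (W : Finset V) (hW : W.card = w)
    (d : ℝ) (hd : 1 ≤ d)
    (hδ : (n : ℝ) - w / (8 * d) ≤ (G.minDegree : ℝ))
    (p : ℝ) (hp1 : p ≤ 1)
    (hp : 500 * d * Real.log n / w ≤ p) :
    (Measure.pi fun _ : Sym2 V =>
        (PMF.bernoulli (Real.toNNReal p) (Real.toNNReal_le_one.mpr hp1)).toMeasure)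
      {f : Sym2 V → Bool |
        (∀ X : Set V, 1 ≤ X.ncard → (X.ncard : ℝ) < w / (2 * d) →
          d * (X.ncard : ℝ) ≤
            (({y : V | y ∈ W ∧ ∃ x ∈ X,
              (G ⊓ SimpleGraph.fromEdgeSet {e | f e = true}).Adj x y}).ncard : ℝ)) ∧
        (∀ X Y : Set V, Disjoint X Y → w / (2 * d) ≤ (X.ncard : ℝ) →
          w / (2 * d) ≤ (Y.ncard : ℝ) →
          ∃ x ∈ X, ∃ y ∈ Y,
            (G ⊓ SimpleGraph.fromEdgeSet {e | f e = true}).Adj x y)} ≥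
      1 - ENNReal.ofReal ((n : ℝ) ^ (-(7 : ℝ))) := by
  subst hcard hW
  set N := Fintype.card V
  obtain hN | hN : N = 1 ∨ 2 ≤ N := by have : 0 < N := Fintype.card_pos; omega
  · simp [hN]
  have hNR : (2 : ℝ) ≤ N := by exact_mod_cast hN
  have hp0 : 0 ≤ p := le_trans (by have := Real.log_pos (by linarith : (1 : ℝ) < N); positivity) hp
  have hq : 500 * d * Real.log N / #W ≤ (p.toNNReal : ℝ) := by rwa [Real.coe_toNNReal p hp0]
  set μ := bernoulliPi (Sym2 V) p.toNNReal (Real.toNNReal_le_one.mpr hp1)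
  set S := {f | (G.keepEdges f).ExpandsInto W d ∧ (G.keepEdges f).JoinsLargeSets (#W / (2 * d))}
  have hbad : μ Sᶜ ≤ ENNReal.ofReal ((N : ℝ) ^ (-(7 : ℝ))) :=
    calc μ Sᶜ ≤ μ {f | ¬(G.keepEdges f).ExpandsInto W d} +
          μ {f | ¬(G.keepEdges f).JoinsLargeSets (#W / (2 * d))} :=
          (measure_mono fun f hf => by simpa [S, imp_iff_not_or] using hf).trans
            (measure_union_le _ _)
      _ ≤ ENNReal.ofReal (N * (N : ℝ) ^ (-88 : ℝ)) + ENNReal.ofReal ((N : ℝ) ^ (-88 : ℝ)) :=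
          add_le_add (G.bernoulliPi_not_expandsInto_le _ hd hδ hq)
            (G.bernoulliPi_not_joinsLargeSets_le _ hd hw hδ hq)
      _ ≤ ENNReal.ofReal ((N : ℝ) ^ (-(7 : ℝ))) := by
          rw [← ENNReal.ofReal_add (by positivity) (by positivity)]
          refine ENNReal.ofReal_le_ofReal ?_
          calc (N : ℝ) * N ^ (-88 : ℝ) + N ^ (-88 : ℝ) = (N + 1) * N ^ (-88 : ℝ) := by ring
            _ ≤ N ^ 2 * N ^ (-88 : ℝ) := by gcongr; nlinarith
            _ ≤ N ^ (-(7 : ℝ)) := Real.pow_mul_rpow_neg_le (by linarith) (by norm_num)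
  change 1 - _ ≤ μ S
  rw [← compl_compl S, prob_compl_eq_one_sub MeasurableSet.of_discrete]
  exact tsub_le_tsub_left hbad 1

/-- Expansion of random subgraphs of nearly complete graphs. The `p`-random
subgraph `G_p` is modelled by sampling independent Bernoulli(`p`) indicators
`f : Sym2 V → Bool` and keeping the edges of `G` whose indicator is `true`. -/
theorem stmt_15 {V : Type*} [Fintype V] [Nonempty V] [DecidableEq V]
    (G : SimpleGraph V) [DecidableRel G.Adj] (n w : ℕ) (hn : 0 < n) (hw : 0 < w)
    (hcard : Fintype.card V = n) (W : Finset V) (hW : W.card = w)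
    (d : ℝ) (hd : 1 ≤ d)
    (hδ : (n : ℝ) - w / (8 * d) ≤ (G.minDegree : ℝ))
    (p : ℝ) (hp0 : 0 ≤ p) (hp1 : p ≤ 1)
    (hp : 500 * d * Real.log n / w ≤ p) :
    (Measure.pi fun _ : Sym2 V =>
        (PMF.bernoulli (Real.toNNReal p) (Real.toNNReal_le_one.mpr hp1)).toMeasure)
      {f : Sym2 V → Bool |
        (∀ X : Set V, 1 ≤ X.ncard → (X.ncard : ℝ) < w / (2 * d) →
          d * (X.ncard : ℝ) ≤
            (({y : V | y ∈ W ∧ ∃ x ∈ X,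
              (G ⊓ SimpleGraph.fromEdgeSet {e | f e = true}).Adj x y}).ncard : ℝ)) ∧
        (∀ X Y : Set V, Disjoint X Y → w / (2 * d) ≤ (X.ncard : ℝ) →
          w / (2 * d) ≤ (Y.ncard : ℝ) →
          ∃ x ∈ X, ∃ y ∈ Y,
            (G ⊓ SimpleGraph.fromEdgeSet {e | f e = true}).Adj x y)} ≥
      1 - ENNReal.ofReal ((n : ℝ) ^ (-(7 : ℝ))) :=
  stmt_15_general G n w hw hcard W hW d hd hδ p hp1 hp
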